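/- Free energy as worst-case β-free-energy difference: F(ρ) = min over β > 0 of [F_β(ρ) - F_β(γ(β))], where F_β(σ) = E(σ) - β^{-1} S(σ) and γ(β) is the Gibbs state at inverse temperature β. The minimum is attained at the intrinsic inverse temperature β(ρ). -/

import Mathlib

open Matrix BigOperators
open scoped ComplexOrder

noncomputable section

variable {n : Type*} [Fintype n] [DecidableEq n]

/-- A density matrix: positive semidefinite with unit trace. -/
def IsDensity (ρ : Matrix n n ℂ) : Prop := ρ.PosSemidef ∧ ρ.trace = 1

/-- Von Neumann entropy via eigenvalues. -/
noncomputable def vnEntropy (ρ : Matrix n n ℂ) : ℝ :=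
  if h : ρ.IsHermitian then ∑ i, Real.negMulLog (h.eigenvalues i) else 0

/-- Energy of a state with respect to a Hamiltonian. -/
noncomputable def energy (H ρ : Matrix n n ℂ) : ℝ := ((H * ρ).trace).re

/-- Gibbs state at inverse temperature β. -/
noncomputable def gibbs (H : Matrix n n ℂ) (β : ℝ) : Matrix n n ℂ :=
  ((NormedSpace.exp (-(β : ℂ) • H)).trace)⁻¹ • NormedSpace.exp (-(β : ℂ) • H)

/-- Bound energy: minimal energy among density matrices with the same entropy. -/
noncomputable def boundEnergy (H ρ : Matrix n n ℂ) : ℝ :=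
  sInf {e | ∃ σ : Matrix n n ℂ, IsDensity σ ∧ vnEntropy σ = vnEntropy ρ ∧ energy H σ = e}

/-- Free energy. -/
noncomputable def freeEnergy (H ρ : Matrix n n ℂ) : ℝ := energy H ρ - boundEnergy H ρ

/-- Matrix logarithm of a Hermitian matrix via spectral decomposition. -/
noncomputable def mlog (A : Matrix n n ℂ) : Matrix n n ℂ :=
  if h : A.IsHermitian then
    (h.eigenvectorUnitary : Matrix n n ℂ) *
      Matrix.diagonal (fun i => (Real.log (h.eigenvalues i) : ℂ)) *
      star (h.eigenvectorUnitary : Matrix n n ℂ)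
  else 0

/-- Quantum relative entropy D(ρ‖σ) = Tr(ρ log ρ - ρ log σ). -/
noncomputable def relEntropy (ρ σ : Matrix n n ℂ) : ℝ :=
  ((ρ * (mlog ρ - mlog σ)).trace).re

/-- Partial trace over the second factor. -/
noncomputable def margA {nA nB : Type*} [Fintype nA] [Fintype nB]
    (ρ : Matrix (nA × nB) (nA × nB) ℂ) : Matrix nA nA ℂ :=
  fun i i' => ∑ j, ρ (i, j) (i', j)

/-- Partial trace over the first factor. -/
noncomputable def margB {nA nB : Type*} [Fintype nA] [Fintype nB]
    (ρ : Matrix (nA × nB) (nA × nB) ℂ) : Matrix nB nB ℂ :=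
  fun j j' => ∑ i, ρ (i, j) (i, j')


/-!
Since `S(γ(β₀)) = S(ρ)`, the difference `F_β(ρ) - F_β(γ(β₀))` equals `E(ρ) - E(γ(β₀))` for every
`β`, so the theorem reduces to `F_β(γ(β)) ≤ F_β(γ(β₀))`. Both Gibbs states are functions of `H`;
in an eigenbasis of `H` this is the classical Gibbs variational principle: for the Boltzmann
distribution `p` of the energy levels and any distribution `q`,
`F_β(q) - F_β(p) = β⁻¹ D(q ‖ p) ≥ 0`.
-/

theorem Real.sum_negMulLog_le_sum_neg_mul_log {ι : Type*} [Fintype ι] {p q : ι → ℝ}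
    (hp : ∀ i, 0 < p i) (hq : ∀ i, 0 ≤ q i) (hpq : ∑ i, p i ≤ ∑ i, q i) :
    ∑ i, Real.negMulLog (q i) ≤ ∑ i, -(q i * Real.log (p i)) := by
  have hterm : ∀ i, Real.negMulLog (q i) + q i * Real.log (p i) ≤ p i - q i := by
    intro i
    have hp0 := (hp i).ne'
    have hsplit := Real.negMulLog_mul (p i) (q i / p i)
    have hle := mul_le_mul_of_nonneg_left
      (Real.negMulLog_le_one_sub_self (div_nonneg (hq i) (hp i).le)) (hp i).le
    have hcross : q i / p i * Real.negMulLog (p i) = -(q i * Real.log (p i)) := by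
      rw [Real.negMulLog]; field_simp
    rw [mul_div_cancel₀ _ hp0, hcross] at hsplit
    rw [mul_sub, mul_one, mul_div_cancel₀ _ hp0] at hle
    linarith
  have hsum := Finset.sum_le_sum fun i (_ : i ∈ Finset.univ) => hterm i
  rw [Finset.sum_add_distrib, Finset.sum_sub_distrib] at hsum
  simp only [Finset.sum_neg_distrib]
  linarith

section Boltzmann

variable {ι : Type*} [Fintype ι] (E : ι → ℝ)

def partitionFunction (β : ℝ) : ℝ := ∑ i, Real.exp (-β * E i)

def boltzmann (β : ℝ) (i : ι) : ℝ := Real.exp (-β * E i) / partitionFunction E β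

section Nonempty

variable [Nonempty ι] (β : ℝ)

lemma partitionFunction_pos : 0 < partitionFunction E β :=
  Finset.sum_pos (fun _ _ => Real.exp_pos _) Finset.univ_nonempty

lemma boltzmann_pos (i : ι) : 0 < boltzmann E β i :=
  div_pos (Real.exp_pos _) (partitionFunction_pos E β)

lemma sum_boltzmann : ∑ i, boltzmann E β i = 1 := by
  simp only [boltzmann, ← Finset.sum_div]
  exact div_self (partitionFunction_pos E β).ne'

lemma sum_neg_mul_log_boltzmann {q : ι → ℝ} (hq : ∑ i, q i = 1) :
    ∑ i, -(q i * Real.log (boltzmann E β i))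
      = β * ∑ i, E i * q i + Real.log (partitionFunction E β) := by
  have hlog (i : ι) :
      Real.log (boltzmann E β i) = -β * E i - Real.log (partitionFunction E β) := by
    rw [boltzmann, Real.log_div (Real.exp_ne_zero _) (partitionFunction_pos E β).ne',
      Real.log_exp]
  calc ∑ i, -(q i * Real.log (boltzmann E β i))
      = ∑ i, (β * (E i * q i) + Real.log (partitionFunction E β) * q i) :=
        Finset.sum_congr rfl fun i _ => by rw [hlog]; ring
    _ = β * ∑ i, E i * q i + Real.log (partitionFunction E β) * ∑ i, q i := by
        rw [Finset.sum_add_distrib, Finset.mul_sum, Finset.mul_sum]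
    _ = _ := by rw [hq, mul_one]

end Nonempty

theorem boltzmann_minimizes_free_energy {β : ℝ} (hβ : 0 < β) {q : ι → ℝ} (hq : ∀ i, 0 ≤ q i)
    (hq1 : ∑ i, q i = 1) :
    ∑ i, E i * boltzmann E β i - β⁻¹ * ∑ i, Real.negMulLog (boltzmann E β i)
      ≤ ∑ i, E i * q i - β⁻¹ * ∑ i, Real.negMulLog (q i) := by
  have : Nonempty ι := by
    by_contra h
    simp [not_nonempty_iff.mp h] at hq1
  have hentropy : ∑ i, Real.negMulLog (boltzmann E β i)
      = β * ∑ i, E i * boltzmann E β i + Real.log (partitionFunction E β) := by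
    rw [← sum_neg_mul_log_boltzmann E β (sum_boltzmann E β)]
    simp only [Real.negMulLog, neg_mul]
  have hgibbs := Real.sum_negMulLog_le_sum_neg_mul_log (boltzmann_pos E β) hq
    ((sum_boltzmann E β).trans hq1.symm).le
  rw [sum_neg_mul_log_boltzmann E β hq1] at hgibbs
  have := mul_le_mul_of_nonneg_left hgibbs (inv_nonneg.mpr hβ.le)
  rw [mul_add, ← mul_assoc, inv_mul_cancel₀ hβ.ne', one_mul] at this
  rw [hentropy, mul_add, ← mul_assoc, inv_mul_cancel₀ hβ.ne', one_mul]
  linarith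

end Boltzmann

namespace Matrix.IsHermitian

variable {𝕜 : Type*} [RCLike 𝕜] {A : Matrix n n 𝕜}

lemma trace_cfc (hA : A.IsHermitian) (f : ℝ → ℝ) :
    (cfc f A).trace = ∑ i, (f (hA.eigenvalues i) : 𝕜) := by
  rw [hA.cfc_eq, IsHermitian.cfc, Unitary.conjStarAlgAut_apply, trace_mul_cycle,
    Unitary.star_mul_self_of_mem hA.eigenvectorUnitary.2, one_mul, trace_diagonal]
  rfl

open Polynomial in
lemma sum_comp_eigenvalues_cfc (hA : A.IsHermitian) (f : ℝ → ℝ) (hfA : (cfc f A).IsHermitian)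
    (g : ℝ → ℝ) : ∑ i, g (hfA.eigenvalues i) = ∑ i, g (f (hA.eigenvalues i)) := by
  have hspec : Finset.univ.val.map hfA.eigenvalues = Finset.univ.val.map (f ∘ hA.eigenvalues) := by
    apply Multiset.map_injective (RCLike.ofReal_injective (K := 𝕜))
    have hroots := roots_multiset_prod_X_sub_C
      (Finset.univ.val.map (RCLike.ofReal ∘ f ∘ hA.eigenvalues : n → 𝕜))
    rw [Multiset.map_map] at hroots
    rw [Multiset.map_map, Multiset.map_map, ← hfA.roots_charpoly_eq_eigenvalues,
      hA.charpoly_cfc_eq, Finset.prod_eq_multiset_prod, ← hroots]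
    rfl
  rw [← Finset.sum_map_val, ← Finset.sum_map_val, ← Function.comp_def g, ← Multiset.map_map,
    hspec, Multiset.map_map]
  rfl

end Matrix.IsHermitian

lemma Matrix.IsHermitian.exp_real_smul_eq_cfc {A : Matrix n n ℂ} (hA : A.IsHermitian) (t : ℝ) :
    NormedSpace.exp ((t : ℂ) • A) = cfc (fun x => Real.exp (t * x)) A := by
  have hdiag : (t : ℂ) • diagonal (RCLike.ofReal ∘ hA.eigenvalues)
      = diagonal (fun i => ((t * hA.eigenvalues i : ℝ) : ℂ)) := by
    rw [← diagonal_smul]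
    congr 1
    ext i
    simp
  have hexp : NormedSpace.exp (fun i => ((t * hA.eigenvalues i : ℝ) : ℂ))
      = RCLike.ofReal ∘ (fun x => Real.exp (t * x)) ∘ hA.eigenvalues := by
    ext i
    rw [Pi.exp_def, ← Complex.exp_eq_exp_ℂ]
    simp [Complex.ofReal_exp]
  rw [hA.cfc_eq, IsHermitian.cfc, Unitary.conjStarAlgAut_apply, ← hexp, ← exp_diagonal]
  conv_lhs => rw [hA.spectral_theorem, Unitary.conjStarAlgAut_apply]
  rw [← smul_mul_assoc, ← mul_smul_comm, hdiag]
  exact exp_units_conj (Unitary.toUnits hA.eigenvectorUnitary) _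

def betaFreeEnergy (H : Matrix n n ℂ) (β : ℝ) (σ : Matrix n n ℂ) : ℝ :=
  energy H σ - β⁻¹ * vnEntropy σ

section Gibbs

variable {H : Matrix n n ℂ}

lemma gibbs_eq_cfc (hH : H.IsHermitian) (β : ℝ) :
    gibbs H β = cfc (fun x => Real.exp (-β * x) / partitionFunction hH.eigenvalues β) H := by
  simp only [div_eq_inv_mul]
  rw [cfc_const_mul _ (fun x => Real.exp (-β * x)) H (by fun_prop), gibbs, ← Complex.ofReal_neg,
    hH.exp_real_smul_eq_cfc, hH.trace_cfc, ← RCLike.ofReal_sum, ← RCLike.ofReal_inv,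
    ← RCLike.real_smul_eq_coe_smul]
  rfl

lemma energy_gibbs (hH : H.IsHermitian) (β : ℝ) :
    energy H (gibbs H β) = ∑ i, hH.eigenvalues i * boltzmann hH.eigenvalues β i := by
  rw [energy, gibbs_eq_cfc hH]
  nth_rewrite 1 [← cfc_id' ℝ H]
  rw [← cfc_mul _ _ H (by fun_prop) (by fun_prop), hH.trace_cfc, ← RCLike.ofReal_sum]
  exact Complex.ofReal_re _

lemma vnEntropy_gibbs (hH : H.IsHermitian) (β : ℝ) :
    vnEntropy (gibbs H β) = ∑ i, Real.negMulLog (boltzmann hH.eigenvalues β i) := by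
  have hcfc : (cfc (fun x => Real.exp (-β * x) / partitionFunction hH.eigenvalues β) H
      ).IsHermitian := cfc_predicate _ H
  rw [gibbs_eq_cfc hH, vnEntropy, dif_pos hcfc, hH.sum_comp_eigenvalues_cfc]
  rfl

lemma betaFreeEnergy_gibbs_le (hH : H.IsHermitian) {β : ℝ} (hβ : 0 < β) (β' : ℝ) :
    betaFreeEnergy H β (gibbs H β) ≤ betaFreeEnergy H β (gibbs H β') := by
  rcases isEmpty_or_nonempty n with hn | hn
  · rw [Subsingleton.elim (gibbs H β) (gibbs H β')]
  · simp only [betaFreeEnergy, energy_gibbs hH, vnEntropy_gibbs hH]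
    exact boltzmann_minimizes_free_energy _ hβ (fun i => (boltzmann_pos _ _ i).le)
      (sum_boltzmann _ _)

end Gibbs

open Kronecker in
theorem freeEnergy_min_over_beta_general {d : ℕ} (H : Matrix (Fin d) (Fin d) ℂ)
    (hH : H.IsHermitian) (ρ : Matrix (Fin d) (Fin d) ℂ)
    (β₀ : ℝ) (hβ₀ : 0 < β₀) (hβ₀S : vnEntropy (gibbs H β₀) = vnEntropy ρ) :
    IsLeast {x : ℝ | ∃ β : ℝ, 0 < β ∧
        x = (energy H ρ - β⁻¹ * vnEntropy ρ)
          - (energy H (gibbs H β) - β⁻¹ * vnEntropy (gibbs H β))}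
      (energy H ρ - energy H (gibbs H β₀)) ∧
    (energy H ρ - β₀⁻¹ * vnEntropy ρ)
        - (energy H (gibbs H β₀) - β₀⁻¹ * vnEntropy (gibbs H β₀))
      = energy H ρ - energy H (gibbs H β₀) := by
  have hgap (β : ℝ) : (energy H ρ - β⁻¹ * vnEntropy ρ)
      - (energy H (gibbs H β₀) - β⁻¹ * vnEntropy (gibbs H β₀))
      = energy H ρ - energy H (gibbs H β₀) := by
    rw [hβ₀S]
    ring
  refine ⟨⟨⟨β₀, hβ₀, (hgap β₀).symm⟩, ?_⟩, hgap β₀⟩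
  rintro _ ⟨β, hβ, rfl⟩
  have hle := betaFreeEnergy_gibbs_le hH hβ β₀
  rw [betaFreeEnergy, betaFreeEnergy] at hle
  linarith [hgap β]

open Kronecker in
/-- F(ρ) = min over β > 0 of [F_β(ρ) - F_β(γ(β))], the minimum being
attained at the intrinsic inverse temperature β₀ = β(ρ), where
F_β(σ) = E(σ) - β⁻¹ S(σ) and F(ρ) = E(ρ) - B(ρ) with B(ρ) = E(γ(β₀)). -/
theorem freeEnergy_min_over_beta {d : ℕ} (H : Matrix (Fin d) (Fin d) ℂ)
    (hH : H.IsHermitian) (ρ : Matrix (Fin d) (Fin d) ℂ) (hρ : IsDensity ρ)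
    (h0 : 0 < vnEntropy ρ) (h1 : vnEntropy ρ < Real.log d)
    (β₀ : ℝ) (hβ₀ : 0 < β₀) (hβ₀S : vnEntropy (gibbs H β₀) = vnEntropy ρ) :
    IsLeast {x : ℝ | ∃ β : ℝ, 0 < β ∧
        x = (energy H ρ - β⁻¹ * vnEntropy ρ)
          - (energy H (gibbs H β) - β⁻¹ * vnEntropy (gibbs H β))}
      (energy H ρ - energy H (gibbs H β₀)) ∧
    (energy H ρ - β₀⁻¹ * vnEntropy ρ)
        - (energy H (gibbs H β₀) - β₀⁻¹ * vnEntropy (gibbs H β₀))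
      = energy H ρ - energy H (gibbs H β₀) :=
  freeEnergy_min_over_beta_general H hH ρ β₀ hβ₀ hβ₀S
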